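/- Conversely, in the Exact Cover reduction: suppose for each S_j ∈ F we pick a multiset A_j = S_j (as colors from U) or a count |S_j| of filler color, and the combined colored multiset—together with base counts of 2m+1+σ−n for each color i ∈ U and 2m+2 for the filler color—is balance-fair over the palette U ∪ {filler}. Then the picked A-sides have total size exactly n and each element color appears exactly once among the picked A-sides; i.e., {S_j : A-side picked} is an exact cover of U. -/

import Mathlib

/-!
Write `c i` for the number of chosen sets containing `i` and `A` for the total size of the chosen
sets, so that `∑ i, c i = A` by double counting. Comparing each element color with the filler
color gives `n - A ≤ c i ≤ n + 2 - A`; summing over `i` rules out both `A < n` and `A > n`.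
With `A = n`, the counts `c i` sum to `n` and pairwise differ by at most one, so they all equal `1`.
-/

open Finset

theorem Int.eq_one_of_sum_eq_card_of_le_add_one {ι : Type*} [Fintype ι] {c : ι → ℤ}
    (hsum : ∑ i, c i = Fintype.card ι) (hc : ∀ i j, c i ≤ c j + 1) (x : ι) : c x = 1 := by
  have hcard : ∑ _i : ι, (1 : ℤ) = Fintype.card ι := by simp
  by_contra hx
  rcases lt_or_gt_of_ne hx with hlt | hgt
  · have : ∑ i, c i < ∑ _i : ι, (1 : ℤ) :=
      sum_lt_sum (fun i _ => by linarith [hc i x]) ⟨x, mem_univ x, hlt⟩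
    omega
  · have : ∑ _i : ι, (1 : ℤ) < ∑ i, c i :=
      sum_lt_sum (fun i _ => by linarith [hc x i]) ⟨x, mem_univ x, hgt⟩
    omega

theorem Int.sum_eq_card_of_forall_mem_Icc {ι : Type*} [Fintype ι] [Nonempty ι] {c : ι → ℤ}
    {A : ℤ} (hsum : ∑ i, c i = A)
    (hc : ∀ i, c i ∈ Set.Icc (Fintype.card ι - A) (Fintype.card ι + 2 - A)) :
    A = Fintype.card ι := by
  set N : ℤ := (Fintype.card ι : ℤ)
  have hN : 1 ≤ N := by simp only [N]; exact_mod_cast Fintype.card_pos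
  have hlow : N * (N - A) ≤ A :=
    calc N * (N - A) = ∑ _i : ι, (N - A) := by rw [sum_const, card_univ, nsmul_eq_mul]
      _ ≤ ∑ i, c i := sum_le_sum fun i _ => (hc i).1
      _ = A := hsum
  have hupp : A ≤ N * (N + 2 - A) :=
    calc A = ∑ i, c i := hsum.symm
      _ ≤ ∑ _i : ι, (N + 2 - A) := sum_le_sum fun i _ => (hc i).2
      _ = N * (N + 2 - A) := by rw [sum_const, card_univ, nsmul_eq_mul]
  nlinarith

theorem Finset.sum_card_filter_mem_eq_sum_card {α β : Type*} [Fintype α] [DecidableEq α]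
    (t : Finset β) (S : β → Finset α) :
    ∑ a, #{b ∈ t | a ∈ S b} = ∑ b ∈ t, #(S b) := by
  simpa [bipartiteAbove, bipartiteBelow] using
    sum_card_bipartiteAbove_eq_sum_card_bipartiteBelow (s := univ) (t := t)
      (r := fun a b => a ∈ S b)

/-- Converse direction of the Exact Cover reduction: if the combined colored
multiset (base counts `2m+1+σ-n` for each element color, `2m+2` for the
filler color, plus the contributions of the chosen `A`-sides and unchosen
`B`-sides) is balance-fair, then the chosen sets form an exact cover. -/
theorem stmt_13 (n m : ℕ) (S : Fin m → Finset (Fin n)) (F' : Finset (Fin m))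
    (σ : ℤ) (hσ : σ = ∑ j, ((S j).card : ℤ))
    (cnt : Fin n → ℤ)
    (hcnt : ∀ i : Fin n,
      cnt i = (2 * m + 1) + σ - n + ((F'.filter fun j => i ∈ S j).card : ℤ))
    (filler : ℤ)
    (hfiller : filler = (2 * m + 2) + ∑ j ∈ F'ᶜ, ((S j).card : ℤ))
    (hbf₁ : ∀ i j : Fin n, cnt i ≤ cnt j + 1)
    (hbf₂ : ∀ i : Fin n, cnt i ≤ filler + 1 ∧ filler ≤ cnt i + 1) :
    ∀ x : Fin n, ∃! j : Fin m, j ∈ F' ∧ x ∈ S j := by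
  intro x
  have : Nonempty (Fin n) := ⟨x⟩
  set c : Fin n → ℤ := fun i => ((F'.filter fun j => i ∈ S j).card : ℤ)
  set A : ℤ := ∑ j ∈ F', ((S j).card : ℤ)
  have hsum : ∑ i, c i = A := by
    simp only [c, A]
    exact_mod_cast sum_card_filter_mem_eq_sum_card F' S
  have hσA : σ = A + ∑ j ∈ F'ᶜ, ((S j).card : ℤ) := by rw [hσ, sum_add_sum_compl]
  have hA : A = n := by
    refine (Int.sum_eq_card_of_forall_mem_Icc hsum fun i => ?_).trans (by simp)
    have hbal := hbf₂ i
    rw [hcnt, hfiller] at hbal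
    simp only [Fintype.card_fin, Set.mem_Icc]
    constructor <;> linarith
  have hc : c x = 1 := by
    refine Int.eq_one_of_sum_eq_card_of_le_add_one (by simp [hsum, hA]) (fun i j => ?_) x
    have hbal := hbf₁ i j
    rw [hcnt, hcnt] at hbal
    linarith
  have hcx : ((#{j ∈ F' | x ∈ S j} : ℕ) : ℤ) = 1 := hc
  have hcard : #{j ∈ F' | x ∈ S j} = 1 := by exact_mod_cast hcx
  simpa using card_eq_one_iff_existsUnique.mp hcard
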